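/- The billiard rotation number ρ̂ is strictly increasing in e and strictly decreasing in f on Δ: if 0 < f < e1 < e2 < 1 then ρ̂(e1,f) < ρ̂(e2,f), and if 0 < f1 < f2 < e < 1 then ρ̂(e,f1) > ρ̂(e,f2). -/

import Mathlib

open Real

/-- Incomplete elliptic integral of the first kind `F(φ,e)`. -/
noncomputable def ellF (φ e : ℝ) : ℝ :=
  ∫ τ in (0:ℝ)..φ, 1 / Real.sqrt (1 - e ^ 2 * Real.sin τ ^ 2)

/-- Complete elliptic integral of the first kind `K(e)`. -/
noncomputable def ellK (e : ℝ) : ℝ := ellF (Real.pi / 2) e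

/-- The angle `ω̂(e,f)`. -/
noncomputable def omegaHat (e f : ℝ) : ℝ :=
  Real.arcsin (Real.sqrt ((e ^ 2 - f ^ 2) / (e ^ 2 * (1 - f ^ 2))))

/-- The billiard rotation number `ρ̂(e,f)`. -/
noncomputable def rhoHat (e f : ℝ) : ℝ := ellF (omegaHat e f) e / (2 * ellK e)

/-!
Jacobi's substitution `τ ↦ arcsin (cos τ / √(1 - e² sin² τ))` is an involution of `[0, π/2]`
that reverses the measure `dτ / √(1 - e² sin² τ)`; it exchanges `ω̂(e,f)` and `arcsin (f/e)`, so
`F(ω̂, e) = K(e) - F(arcsin (f/e), e)` and `ρ̂ = 1/2 - F(arcsin (f/e), e) / (2 K(e))`.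
Monotonicity in `f` is now immediate. For `e`, the substitution `z = e sin σ` gives
`F(arcsin (f/e), e) = ∫₀^f dz / (√(e² - z²) √(1 - z²))`, which decreases in `e` while `K(e)`
increases.
-/

open Set intervalIntegral

lemma one_sub_sq_mul_sin_sq_pos {e : ℝ} (he : e ^ 2 < 1) (τ : ℝ) :
    0 < 1 - e ^ 2 * sin τ ^ 2 := by
  nlinarith [sin_sq_le_one τ, sq_nonneg e]

lemma continuous_ellF_integrand {e : ℝ} (he : e ^ 2 < 1) :
    Continuous fun τ : ℝ => 1 / √(1 - e ^ 2 * sin τ ^ 2) :=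
  continuous_const.div (by fun_prop) fun τ => (sqrt_pos.2 (one_sub_sq_mul_sin_sq_pos he τ)).ne'

lemma hasDerivAt_ellF {e : ℝ} (he : e ^ 2 < 1) (φ : ℝ) :
    HasDerivAt (fun φ => ellF φ e) (1 / √(1 - e ^ 2 * sin φ ^ 2)) φ :=
  ((continuous_ellF_integrand he).integral_hasStrictDerivAt 0 φ).hasDerivAt

lemma strictMono_ellF {e : ℝ} (he : e ^ 2 < 1) : StrictMono fun φ => ellF φ e :=
  strictMono_of_hasDerivAt_pos (hasDerivAt_ellF he) fun τ =>
    one_div_pos.2 (sqrt_pos.2 (one_sub_sq_mul_sin_sq_pos he τ))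

lemma ellF_zero (e : ℝ) : ellF 0 e = 0 := integral_same

lemma ellK_pos {e : ℝ} (he : e ^ 2 < 1) : 0 < ellK e := by
  rw [← ellF_zero e]
  exact strictMono_ellF he (by positivity)

lemma ellK_strictMonoOn : StrictMonoOn ellK (Ico 0 1) := by
  rintro e₁ ⟨he₁, -⟩ e₂ ⟨-, he₂⟩ h
  have hsq : e₁ ^ 2 < e₂ ^ 2 := by gcongr
  have he₂' : e₂ ^ 2 < 1 := by nlinarith
  refine integral_lt_integral_of_continuousOn_of_le_of_exists_lt (by positivity)
    (continuous_ellF_integrand (hsq.trans he₂')).continuousOn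
    (continuous_ellF_integrand he₂').continuousOn (fun τ _ => ?_)
    ⟨π / 2, by simp [pi_div_two_pos.le], ?_⟩
  · gcongr 1 / √(1 - ?_ * _)
    exact sqrt_pos.2 (one_sub_sq_mul_sin_sq_pos he₂' τ)
  · simp only [sin_pi_div_two, one_pow, mul_one]
    gcongr

noncomputable def jacobiAngle (e t : ℝ) : ℝ := arcsin (cos t / √(1 - e ^ 2 * sin t ^ 2))

section jacobiAngle

variable {e : ℝ}

lemma one_sub_sq_cos_div (he : e ^ 2 < 1) (t : ℝ) :
    1 - (cos t / √(1 - e ^ 2 * sin t ^ 2)) ^ 2 =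
      (1 - e ^ 2) * sin t ^ 2 / (1 - e ^ 2 * sin t ^ 2) := by
  have hr := one_sub_sq_mul_sin_sq_pos he t
  rw [div_pow, sq_sqrt hr.le, eq_div_iff hr.ne', sub_mul, div_mul_cancel₀ _ hr.ne']
  linear_combination -sin_sq_add_cos_sq t

lemma sin_jacobiAngle (he : e ^ 2 < 1) (t : ℝ) :
    sin (jacobiAngle e t) = cos t / √(1 - e ^ 2 * sin t ^ 2) := by
  have hr := one_sub_sq_mul_sin_sq_pos he t
  have hq : 0 ≤ 1 - e ^ 2 := by linarith
  have hG : (cos t / √(1 - e ^ 2 * sin t ^ 2)) ^ 2 ≤ 1 := by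
    rw [← sub_nonneg, one_sub_sq_cos_div he]
    positivity
  exact sin_arcsin' (abs_le.1 ((sq_le_one_iff_abs_le_one _).1 hG))

lemma one_sub_sq_mul_sin_sq_jacobiAngle (he : e ^ 2 < 1) (t : ℝ) :
    1 - e ^ 2 * sin (jacobiAngle e t) ^ 2 = (1 - e ^ 2) / (1 - e ^ 2 * sin t ^ 2) := by
  have hr := one_sub_sq_mul_sin_sq_pos he t
  rw [sin_jacobiAngle he, div_pow, sq_sqrt hr.le, eq_div_iff hr.ne']
  field_simp
  linear_combination -e ^ 2 * sin_sq_add_cos_sq t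

lemma hasDerivAt_jacobiAngle {t : ℝ} (he : e ^ 2 < 1) (ht : 0 < sin t) :
    HasDerivAt (jacobiAngle e) (-√(1 - e ^ 2) / (1 - e ^ 2 * sin t ^ 2)) t := by
  have hr := one_sub_sq_mul_sin_sq_pos he t
  have hq : 0 < 1 - e ^ 2 := by linarith
  have hr₀ : 0 < √(1 - e ^ 2 * sin t ^ 2) := sqrt_pos.2 hr
  have hu : HasDerivAt (fun s => 1 - e ^ 2 * sin s ^ 2) (-(2 * e ^ 2 * sin t * cos t)) t :=
    ((((hasDerivAt_sin t).pow 2).const_mul (e ^ 2)).const_sub 1).congr_deriv (by ring)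
  have hG := (hasDerivAt_cos t).fun_div (hu.sqrt hr.ne') hr₀.ne'
  have hG1 : (cos t / √(1 - e ^ 2 * sin t ^ 2)) ^ 2 < 1 := by
    rw [← sub_pos, one_sub_sq_cos_div he]
    positivity
  obtain ⟨hG_gt, hG_lt⟩ := abs_lt.1 ((sq_lt_one_iff_abs_lt_one _).1 hG1)
  refine ((hasDerivAt_arcsin hG_gt.ne' hG_lt.ne).comp t hG).congr_deriv ?_
  rw [one_sub_sq_cos_div he, sqrt_div' _ hr.le, sqrt_mul hq.le, sqrt_sq ht.le]
  set r := √(1 - e ^ 2 * sin t ^ 2)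
  have hq2 := sq_sqrt hq.le
  have hr2 : r ^ 2 = 1 - e ^ 2 * sin t ^ 2 := sq_sqrt hr.le
  field_simp
  linear_combination r ^ 2 * hq2 + r ^ 2 * e ^ 2 * sin_sq_add_cos_sq t - e ^ 2 * cos t ^ 2 * hr2

lemma hasDerivAt_ellF_jacobiAngle {t : ℝ} (he : e ^ 2 < 1) (ht : 0 < sin t) :
    HasDerivAt (fun s => ellF (jacobiAngle e s) e) (-(1 / √(1 - e ^ 2 * sin t ^ 2))) t := by
  refine ((hasDerivAt_ellF he _).comp t (hasDerivAt_jacobiAngle he ht)).congr_deriv ?_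
  have hr := one_sub_sq_mul_sin_sq_pos he t
  have hq : 0 < 1 - e ^ 2 := by linarith
  rw [one_sub_sq_mul_sin_sq_jacobiAngle he, sqrt_div' _ hr.le]
  have hr₀ := sqrt_pos.2 hr
  have hq₀ := sqrt_pos.2 hq
  field_simp
  rw [sq_sqrt hr.le]

lemma ellF_add_ellF_jacobiAngle {t : ℝ} (he : e ^ 2 < 1) (ht₀ : 0 < t)
    (htπ : t < π) :
    ellF t e + ellF (jacobiAngle e t) e = ellK e := by
  have hderiv : ∀ x ∈ uIcc t (π / 2), HasDerivAt (fun s => ellF (jacobiAngle e s) e)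
      (-(1 / √(1 - e ^ 2 * sin x ^ 2))) x := fun x hx =>
    hasDerivAt_ellF_jacobiAngle he <| sin_pos_of_pos_of_lt_pi
      (lt_of_lt_of_le (lt_min ht₀ pi_div_two_pos) hx.1)
      (lt_of_le_of_lt hx.2 (max_lt htπ (by linarith [pi_pos])))
  have hFTC := integral_eq_sub_of_hasDerivAt hderiv
    ((continuous_ellF_integrand he).neg.intervalIntegrable _ _)
  have hend : jacobiAngle e (π / 2) = 0 := by simp [jacobiAngle]
  rw [integral_neg, hend, ellF_zero] at hFTC
  have hsplit : ellF t e + ∫ x in t..π / 2, 1 / √(1 - e ^ 2 * sin x ^ 2) = ellK e :=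
    integral_add_adjacent_intervals ((continuous_ellF_integrand he).intervalIntegrable _ _)
      ((continuous_ellF_integrand he).intervalIntegrable _ _)
  linarith

end jacobiAngle

section omegaHat

variable {e f : ℝ}

lemma omegaHat_pos (hf : 0 ≤ f) (hfe : f < e) (he : e < 1) : 0 < omegaHat e f := by
  have he₀ : 0 < e := hf.trans_lt hfe
  have hef : 0 < e ^ 2 - f ^ 2 := by nlinarith
  have hf2 : 0 < 1 - f ^ 2 := by nlinarith
  exact arcsin_pos.2 (sqrt_pos.2 (by positivity))

lemma jacobiAngle_omegaHat (hf : 0 ≤ f) (hfe : f < e) (he : e < 1) :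
    jacobiAngle e (omegaHat e f) = arcsin (f / e) := by
  have he₀ : 0 < e := hf.trans_lt hfe
  have he2 : 0 < 1 - e ^ 2 := by nlinarith
  have hf2 : 0 < 1 - f ^ 2 := by nlinarith
  set X := (e ^ 2 - f ^ 2) / (e ^ 2 * (1 - f ^ 2)) with hX
  have hX₀ : 0 ≤ X := div_nonneg (by nlinarith) (by positivity)
  have hX₁ : X ≤ 1 := by
    rw [div_le_one (by positivity)]
    nlinarith [mul_nonneg (sq_nonneg f) he2.le]
  have hsin : sin (omegaHat e f) = √X := sin_arcsin (by linarith [sqrt_nonneg X])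
    (sqrt_le_one.2 hX₁)
  have hcos : cos (omegaHat e f) = √(1 - X) := by rw [omegaHat, cos_arcsin, sq_sqrt hX₀]
  have hratio : (1 - X) / (1 - e ^ 2 * X) = (f / e) ^ 2 := by
    have hden : 1 - e ^ 2 * X = (1 - e ^ 2) / (1 - f ^ 2) := by
      rw [hX]
      field_simp
      ring
    rw [hden, hX]
    field_simp
    ring
  rw [jacobiAngle, hsin, hcos, sq_sqrt hX₀, ← sqrt_div' _ (by nlinarith), hratio,
    sqrt_sq (by positivity)]

lemma ellF_omegaHat (hf : 0 ≤ f) (hfe : f < e) (he : e < 1) :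
    ellF (omegaHat e f) e = ellK e - ellF (arcsin (f / e)) e := by
  have he2 : e ^ 2 < 1 := by nlinarith
  have hπ : omegaHat e f < π := (arcsin_le_pi_div_two _).trans_lt (by linarith [pi_pos])
  rw [← ellF_add_ellF_jacobiAngle he2 (omegaHat_pos hf hfe he) hπ, jacobiAngle_omegaHat hf hfe he]
  ring

lemma rhoHat_eq_half_sub (hf : 0 ≤ f) (hfe : f < e) (he : e < 1) :
    rhoHat e f = 1 / 2 - ellF (arcsin (f / e)) e / (2 * ellK e) := by
  have hK := (ellK_pos (e := e) (by nlinarith)).ne'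
  rw [rhoHat, ellF_omegaHat hf hfe he]
  field_simp

end omegaHat

noncomputable def ellH (e f : ℝ) : ℝ :=
  ∫ z in (0 : ℝ)..f, 1 / (√(e ^ 2 - z ^ 2) * √(1 - z ^ 2))

section ellH

variable {e f : ℝ}

lemma continuousOn_ellH_integrand (hfe : f < e) (hf : f < 1) :
    ContinuousOn (fun z : ℝ => 1 / (√(e ^ 2 - z ^ 2) * √(1 - z ^ 2))) (Icc 0 f) := by
  refine continuousOn_const.div (by fun_prop) fun z ⟨hz₀, hzf⟩ => ?_
  have hez : 0 < e ^ 2 - z ^ 2 := by nlinarith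
  have hz1 : 0 < 1 - z ^ 2 := by nlinarith
  positivity

lemma hasDerivAt_ellF_arcsin_div (he : e < 1) {z : ℝ} (hz₀ : 0 ≤ z) (hze : z < e) :
    HasDerivAt (fun z => ellF (arcsin (z / e)) e) (1 / (√(e ^ 2 - z ^ 2) * √(1 - z ^ 2))) z := by
  have he₀ : 0 < e := hz₀.trans_lt hze
  have hze' : z / e < 1 := (div_lt_one he₀).2 hze
  have hz' : -1 < z / e := by linarith [div_nonneg hz₀ he₀.le]
  refine ((hasDerivAt_ellF (e := e) (by nlinarith) _).comp z
    ((hasDerivAt_arcsin hz'.ne' hze'.ne).comp z ((hasDerivAt_id z).div_const e))).congr_deriv ?_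
  have hez : e ^ 2 - z ^ 2 = e ^ 2 * (1 - (z / e) ^ 2) := by field_simp
  simp only [Function.comp_def, id]
  rw [sin_arcsin hz'.le hze'.le, hez, sqrt_mul (sq_nonneg e), sqrt_sq he₀.le,
    show 1 - e ^ 2 * (z / e) ^ 2 = 1 - z ^ 2 by field_simp]
  field_simp

lemma ellF_arcsin_div (hf : 0 ≤ f) (hfe : f < e) (he : e < 1) :
    ellF (arcsin (f / e)) e = ellH e f := by
  have hFTC := integral_eq_sub_of_hasDerivAt (f := fun z => ellF (arcsin (z / e)) e)
    (fun z hz => ?_)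
    ((continuousOn_ellH_integrand hfe (hfe.trans he)).intervalIntegrable_of_Icc hf)
  · rw [zero_div, arcsin_zero, ellF_zero, sub_zero] at hFTC
    exact hFTC.symm
  rw [uIcc_of_le hf] at hz
  exact hasDerivAt_ellF_arcsin_div he hz.1 (hz.2.trans_lt hfe)

lemma strictAntiOn_ellH (hf : 0 < f) (hf1 : f < 1) :
    StrictAntiOn (fun e => ellH e f) (Ioi f) := by
  intro e₁ (he₁ : f < e₁) e₂ (he₂ : f < e₂) h₁₂
  refine integral_lt_integral_of_continuousOn_of_le_of_exists_lt hf
    (continuousOn_ellH_integrand he₂ hf1) (continuousOn_ellH_integrand he₁ hf1)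
    (fun z ⟨hz₀, hzf⟩ => ?_) ⟨0, ⟨le_rfl, hf.le⟩, ?_⟩
  · have hez : 0 < e₁ ^ 2 - z ^ 2 := by nlinarith
    have hz1 : 0 < 1 - z ^ 2 := by nlinarith
    gcongr 1 / (√(?_ - _) * _)
    nlinarith
  · have he₁₀ : 0 < e₁ := hf.trans he₁
    simp only [zero_pow two_ne_zero, sub_zero, sqrt_one, mul_one]
    gcongr

end ellH

lemma strictMonoOn_rhoHat_left {f : ℝ} (hf : 0 < f) :
    StrictMonoOn (fun e => rhoHat e f) (Ioo f 1) := by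
  rintro e₁ ⟨hfe₁, he₁⟩ e₂ ⟨hfe₂, he₂⟩ h₁₂
  show rhoHat e₁ f < rhoHat e₂ f
  rw [rhoHat_eq_half_sub hf.le hfe₁ he₁, rhoHat_eq_half_sub hf.le hfe₂ he₂,
    ellF_arcsin_div hf.le hfe₁ he₁, ellF_arcsin_div hf.le hfe₂ he₂, sub_lt_sub_iff_left]
  have hH : ellH e₂ f < ellH e₁ f := strictAntiOn_ellH hf (hfe₁.trans he₁) hfe₁ hfe₂ h₁₂
  have hH₀ : 0 ≤ ellH e₁ f := integral_nonneg hf.le fun z _ => by positivity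
  have hK : ellK e₁ ≤ ellK e₂ :=
    (ellK_strictMonoOn ⟨(hf.trans hfe₁).le, he₁⟩ ⟨(hf.trans hfe₂).le, he₂⟩ h₁₂).le
  have hK₀ : 0 < ellK e₁ := ellK_pos (by nlinarith)
  exact div_lt_div₀ hH (by linarith) hH₀ (by linarith)

lemma strictAntiOn_rhoHat_right {e : ℝ} (he : e < 1) : StrictAntiOn (rhoHat e) (Ico 0 e) := by
  rintro f₁ ⟨hf₁, hf₁e⟩ f₂ ⟨hf₂, hf₂e⟩ h₁₂
  have he₀ : 0 < e := hf₁.trans_lt hf₁e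
  rw [rhoHat_eq_half_sub hf₂ hf₂e he, rhoHat_eq_half_sub hf₁ hf₁e he, sub_lt_sub_iff_left]
  have hF : ellF (arcsin (f₁ / e)) e < ellF (arcsin (f₂ / e)) e :=
    strictMono_ellF (by nlinarith) <| arcsin_lt_arcsin (by linarith [div_nonneg hf₁ he₀.le])
      (by gcongr) ((div_le_one he₀).2 hf₂e.le)
  exact div_lt_div_of_pos_right hF (by linarith [ellK_pos (e := e) (by nlinarith)])

/-- the billiard rotation number is strictly increasing in `e` and
strictly decreasing in `f` on `Δ`. -/
theorem rhoHat_monotone :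
    (∀ e1 e2 f : ℝ, 0 < f → f < e1 → e1 < e2 → e2 < 1 → rhoHat e1 f < rhoHat e2 f) ∧
    (∀ e f1 f2 : ℝ, 0 < f1 → f1 < f2 → f2 < e → e < 1 → rhoHat e f2 < rhoHat e f1) :=
  ⟨fun _ _ _ hf hfe₁ h₁₂ he₂ =>
    strictMonoOn_rhoHat_left hf ⟨hfe₁, h₁₂.trans he₂⟩ ⟨hfe₁.trans h₁₂, he₂⟩ h₁₂,
   fun _ _ _ hf₁ h₁₂ hf₂e he =>
    strictAntiOn_rhoHat_right he ⟨hf₁.le, h₁₂.trans hf₂e⟩ ⟨(hf₁.trans h₁₂).le, hf₂e⟩ h₁₂⟩
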